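/- Let α > 0, let μ : ℝ → ℝ be continuous and nonnegative, let b₁ > 0 be a constant, and suppose the initial data is constant on the fertile window: φ(a) = φ₀ > 0 for all a ∈ (0,α]. Let n be the explicit characteristic solution of the McKendrick equation with boundary condition n(0,t) = b₁·n(α,t) and initial data φ, set r = b₁·exp(−∫₀^α μ(s) ds) and m(a,t) = ⌊(t−a)/α⌋ + 1. Then for every a ≥ 0 and t ≥ a: φ₀·exp(−∫₀^α μ(s) ds)·exp(−∫_α^a μ(s) ds) ≤ n(a,t)·r^{−m(a,t)} ≤ φ₀·exp(−∫_α^a μ(s) ds). In particular the oscillation of t ↦ n(a,t)·r^{−m(a,t)} is at most A(a) = φ₀·exp(∫_a^α μ(s) ds)·(1 − exp(−∫₀^α μ(s) ds)). -/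
import Mathlib


open MeasureTheory Real Set Filter

/-- for constant initial data `φ ≡ φ₀ > 0` on the fertile window
`(0,α]`, the normalized solution `n(a,t)·r^{−m(a,t)}` lies between
`φ₀·exp(−∫₀^α μ)·exp(−∫_α^a μ)` and `φ₀·exp(−∫_α^a μ)` for all `t ≥ a`; in
particular its oscillation is at most
`A(a) = φ₀·exp(∫_a^α μ)·(1 − exp(−∫₀^α μ))`. -/
theorem mckendrick_one_age_class_amplitude_bounds
    (α : ℝ) (hα : 0 < α)
    (μ : ℝ → ℝ) (hμc : Continuous μ) (hμ0 : ∀ x, 0 ≤ μ x)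
    (b₁ : ℝ) (hb₁ : 0 < b₁)
    (φ : ℝ → ℝ) (φ₀ : ℝ) (hφ₀ : 0 < φ₀)
    (hφconst : ∀ a ∈ Set.Ioc (0:ℝ) α, φ a = φ₀)
    (n : ℝ → ℝ → ℝ)
    (hn₁ : ∀ a t : ℝ, 0 ≤ t → t < a →
      n a t = φ (a - t) * Real.exp (-(∫ s in (0:ℝ)..t, μ (s + a - t))))
    (hn₂ : ∀ a t : ℝ, 0 ≤ a → a ≤ t →
      ∀ m : ℕ, (m : ℤ) = ⌊(t - a) / α⌋ + 1 →
      n a t = b₁ ^ m * φ ((m : ℝ) * α + a - t) *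
        Real.exp (-(∫ s in (0:ℝ)..(t - a - ((m : ℝ) - 1) * α),
          μ (s + (m : ℝ) * α + a - t))) *
        Real.exp (-(((m : ℝ) - 1) * ∫ s in (0:ℝ)..α, μ s)) *
        Real.exp (-(∫ s in (0:ℝ)..a, μ s)))
    (r : ℝ) (hr : r = b₁ * Real.exp (-(∫ s in (0:ℝ)..α, μ s)))
    (mm : ℝ → ℝ → ℤ) (hmm : ∀ a t, mm a t = ⌊(t - a) / α⌋ + 1) :
    (∀ a : ℝ, 0 ≤ a → ∀ t : ℝ, a ≤ t →
      φ₀ * Real.exp (-(∫ s in (0:ℝ)..α, μ s)) * Real.exp (-(∫ s in α..a, μ s))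
        ≤ n a t * r ^ (-(mm a t)) ∧
      n a t * r ^ (-(mm a t)) ≤ φ₀ * Real.exp (-(∫ s in α..a, μ s))) ∧
    (∀ a : ℝ, 0 ≤ a → ∀ t₁ t₂ : ℝ, a ≤ t₁ → a ≤ t₂ →
      |n a t₁ * r ^ (-(mm a t₁)) - n a t₂ * r ^ (-(mm a t₂))| ≤
        φ₀ * Real.exp (∫ s in a..α, μ s) *
          (1 - Real.exp (-(∫ s in (0:ℝ)..α, μ s)))) := by
  have hint : ∀ u v : ℝ, IntervalIntegrable μ volume u v :=
    fun u v => hμc.intervalIntegrable u v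
  have hI0 : (0:ℝ) ≤ ∫ s in (0:ℝ)..α, μ s :=
    intervalIntegral.integral_nonneg hα.le (fun x _ => hμ0 x)
  have main : ∀ a : ℝ, 0 ≤ a → ∀ t : ℝ, a ≤ t →
      φ₀ * Real.exp (-(∫ s in (0:ℝ)..α, μ s)) * Real.exp (-(∫ s in α..a, μ s))
        ≤ n a t * r ^ (-(mm a t)) ∧
      n a t * r ^ (-(mm a t)) ≤ φ₀ * Real.exp (-(∫ s in α..a, μ s)) := by
    intro a ha t ht
    set k : ℤ := ⌊(t - a) / α⌋ with hk
    have hk0 : 0 ≤ k := Int.floor_nonneg.mpr (div_nonneg (sub_nonneg.mpr ht) hα.le)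
    set m : ℕ := k.toNat + 1 with hm
    have hmk : (m : ℤ) = k + 1 := by
      simp [hm, Int.toNat_of_nonneg hk0]
    have hmmval : mm a t = (m : ℤ) := by rw [hmm, hmk, hk]
    have hmr : (m : ℝ) = (k : ℝ) + 1 := by exact_mod_cast congrArg (fun z : ℤ => (z : ℝ)) hmk
    have h1 : (k : ℝ) * α ≤ t - a := by
      have h := Int.floor_le ((t - a) / α)
      rw [← hk] at h
      have := mul_le_mul_of_nonneg_right h hα.le
      rwa [div_mul_cancel₀ _ hα.ne'] at this
    have h2 : t - a < ((k : ℝ) + 1) * α := by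
      have h := Int.lt_floor_add_one ((t - a) / α)
      rw [← hk] at h
      have := mul_lt_mul_of_pos_right h hα
      rwa [div_mul_cancel₀ _ hα.ne'] at this
    set τ : ℝ := t - a - ((m : ℝ) - 1) * α with hτ
    have hτ0 : 0 ≤ τ := by rw [hτ, hmr]; nlinarith
    have hτα : τ < α := by rw [hτ, hmr]; nlinarith
    have harg : (m : ℝ) * α + a - t = α - τ := by rw [hτ]; ring
    have hφarg : φ ((m : ℝ) * α + a - t) = φ₀ := by
      apply hφconst
      rw [harg]
      constructor
      · linarith
      · linarith
    have hn := hn₂ a t ha ht m hmk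
    have hJ : (∫ s in (0:ℝ)..(t - a - ((m : ℝ) - 1) * α), μ (s + (m : ℝ) * α + a - t))
        = ∫ s in (α - τ)..α, μ s := by
      rw [show (fun s => μ (s + (m : ℝ) * α + a - t))
          = fun s => μ (s + ((m : ℝ) * α + a - t)) from
        funext fun s => congrArg μ (by ring)]
      rw [intervalIntegral.integral_comp_add_right, harg, ← hτ, zero_add,
        show τ + (α - τ) = α from by ring]
    have hJ0 : (0:ℝ) ≤ ∫ s in (α - τ)..α, μ s :=
      intervalIntegral.integral_nonneg (by linarith) (fun x _ => hμ0 x)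
    have hJI : (∫ s in (α - τ)..α, μ s) ≤ ∫ s in (0:ℝ)..α, μ s :=
      intervalIntegral.integral_mono_interval (by linarith) (by linarith) le_rfl
        (Filter.Eventually.of_forall fun x => hμ0 x) (hint 0 α)
    have hadj : (∫ s in (0:ℝ)..α, μ s) + (∫ s in α..a, μ s) = ∫ s in (0:ℝ)..a, μ s :=
      intervalIntegral.integral_add_adjacent_intervals (hint 0 α) (hint α a)
    have hprod : n a t * r ^ (-(mm a t))
        = φ₀ * Real.exp (-(∫ s in (α - τ)..α, μ s)) * Real.exp (-(∫ s in α..a, μ s)) := by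
      rw [hn, hφarg, hJ, hmmval, hr, ← hadj, zpow_neg, zpow_natCast, mul_pow,
        ← Real.exp_nat_mul, mul_inv, ← Real.exp_neg]
      rw [show b₁ ^ m * φ₀ * Real.exp (-(∫ s in (α - τ)..α, μ s)) *
          Real.exp (-(((m : ℝ) - 1) * ∫ s in (0:ℝ)..α, μ s)) *
          Real.exp (-((∫ s in (0:ℝ)..α, μ s) + ∫ s in α..a, μ s)) *
          ((b₁ ^ m)⁻¹ * Real.exp (-((m : ℝ) * -(∫ s in (0:ℝ)..α, μ s)))) =
          (b₁ ^ m * (b₁ ^ m)⁻¹) * (φ₀ * (Real.exp (-(∫ s in (α - τ)..α, μ s)) *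
          (Real.exp (-(((m : ℝ) - 1) * ∫ s in (0:ℝ)..α, μ s)) *
           Real.exp (-((∫ s in (0:ℝ)..α, μ s) + ∫ s in α..a, μ s)) *
           Real.exp (-((m : ℝ) * -(∫ s in (0:ℝ)..α, μ s)))))) from by ring]
      rw [mul_inv_cancel₀ (pow_ne_zero m hb₁.ne'), one_mul, ← Real.exp_add, ← Real.exp_add]
      rw [show -(((m : ℝ) - 1) * ∫ s in (0:ℝ)..α, μ s) +
          -((∫ s in (0:ℝ)..α, μ s) + ∫ s in α..a, μ s) +
           -((m : ℝ) * -(∫ s in (0:ℝ)..α, μ s)) = -(∫ s in α..a, μ s) from by ring]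
      ring
    rw [hprod]
    constructor
    · exact mul_le_mul_of_nonneg_right
        (mul_le_mul_of_nonneg_left (Real.exp_le_exp.mpr (neg_le_neg hJI)) hφ₀.le)
        (Real.exp_pos _).le
    · have h1 : Real.exp (-(∫ s in (α - τ)..α, μ s)) ≤ 1 :=
        Real.exp_le_one_iff.mpr (neg_nonpos.mpr hJ0)
      have h2 := mul_le_mul_of_nonneg_right
        (mul_le_mul_of_nonneg_left h1 hφ₀.le)
        (Real.exp_pos (-(∫ s in α..a, μ s))).le
      simpa using h2
  refine ⟨main, ?_⟩
  intro a ha t₁ t₂ ht₁ ht₂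
  obtain ⟨hL1, hU1⟩ := main a ha t₁ ht₁
  obtain ⟨hL2, hU2⟩ := main a ha t₂ ht₂
  have hsym : -(∫ s in α..a, μ s) = ∫ s in a..α, μ s := by
    rw [intervalIntegral.integral_symm]; ring
  have hC : φ₀ * Real.exp (∫ s in a..α, μ s) * (1 - Real.exp (-(∫ s in (0:ℝ)..α, μ s)))
      = φ₀ * Real.exp (-(∫ s in α..a, μ s)) -
        φ₀ * Real.exp (-(∫ s in (0:ℝ)..α, μ s)) * Real.exp (-(∫ s in α..a, μ s)) := by
    rw [hsym]; ring
  rw [abs_sub_le_iff]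
  constructor <;> linarith
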